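/- Let r, k, α, φ > 0 and x₀ > 0. Suppose y, z : [0,∞) → ℝ are continuous, nonnegative, and y(t) → 0, z(t) → 0 as t → ∞, and x : [0,∞) → ℝ is positive, continuous, differentiable on (0,∞) with x(0) = x₀ and x′(t) = r·x(t)·(1 − x(t)/k) − α·x(t)·y(t) − φ·α·x(t)·z(t). Then x(t) → k as t → ∞. -/

import Mathlib

/-!
With `g = α y + φ α z → 0`, the reciprocal `w = 1/x - 1/k` solves the linear equation
`w' = (g - r) w + g / k`. Once `g ≤ r / 2`, the square `V = w²` satisfies
`V' ≤ -(r/2) V + o(1)`, so Grönwall's inequality drives `w` to `0`, i.e. `x → k`.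
-/

open Filter Topology

theorem tendsto_gronwallBound_atTop_of_neg {K : ℝ} (hK : K < 0) (δ ε : ℝ) :
    Tendsto (gronwallBound δ K ε) atTop (𝓝 (-ε / K)) := by
  rw [gronwallBound_of_K_ne_0 hK.ne]
  have hexp : Tendsto (fun x => Real.exp (K * x)) atTop (𝓝 0) :=
    Real.tendsto_exp_atBot.comp (tendsto_id.const_mul_atTop_of_neg hK)
  convert (hexp.const_mul δ).add ((hexp.sub_const 1).const_mul (ε / K)) using 2
  ring

theorem tendsto_zero_of_hasDerivAt_le_neg_mul_add {V V' e : ℝ → ℝ} {c : ℝ} (hc : 0 < c)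
    (he : Tendsto e atTop (𝓝 0)) (hV : ∀ᶠ t in atTop, HasDerivAt V (V' t) t)
    (hV' : ∀ᶠ t in atTop, V' t ≤ -c * V t + e t) (hV0 : ∀ᶠ t in atTop, 0 ≤ V t) :
    Tendsto V atTop (𝓝 0) := by
  refine tendsto_order.2 ⟨fun a ha => hV0.mono fun t ht => ha.trans_le ht, fun ε hε => ?_⟩
  have he' : ∀ᶠ t in atTop, e t ≤ c * (ε / 2) :=
    he.eventually (eventually_le_nhds (by positivity))
  obtain ⟨T, hT⟩ := eventually_atTop.1 (hV.and (hV'.and he'))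
  have hbound : ∀ s ≥ T, V s ≤ gronwallBound (V T) (-c) (c * (ε / 2)) (s - T) := fun s hs =>
    le_gronwallBound_of_liminf_deriv_right_le (f' := V')
      (fun t ht => (hT t ht.1).1.continuousAt.continuousWithinAt)
      (fun t ht ρ hρ => ((hT t ht.1).1.hasDerivWithinAt.liminf_right_slope_le hρ).mono
        fun u hu => by rwa [slope_def_field, div_eq_inv_mul] at hu)
      le_rfl (fun t ht => by obtain ⟨-, hle, hsmall⟩ := hT t ht.1; linarith) s ⟨hs, le_rfl⟩
  have hshift : Tendsto (fun s : ℝ => s - T) atTop atTop := by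
    simpa only [sub_eq_add_neg, id] using tendsto_atTop_add_const_right atTop (-T) tendsto_id
  have hlim := (tendsto_gronwallBound_atTop_of_neg (neg_lt_zero.2 hc) (V T) (c * (ε / 2))).comp
    hshift
  have hlt : -(c * (ε / 2)) / -c < ε := by
    rw [neg_div_neg_eq, mul_div_cancel_left₀ _ hc.ne']
    linarith
  filter_upwards [eventually_ge_atTop T, hlim.eventually (eventually_lt_nhds hlt)]
    with s hs hs'
  exact (hbound s hs).trans_lt hs'

theorem tendsto_zero_of_hasDerivAt_eq_mul_add {w a q : ℝ → ℝ} {c : ℝ} (hc : 0 < c)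
    (ha : ∀ᶠ t in atTop, a t ≤ -c) (hq : Tendsto q atTop (𝓝 0))
    (hw : ∀ᶠ t in atTop, HasDerivAt w (a t * w t + q t) t) :
    Tendsto w atTop (𝓝 0) := by
  have hsq : Tendsto (fun t => w t ^ 2) atTop (𝓝 0) := by
    refine tendsto_zero_of_hasDerivAt_le_neg_mul_add
      (V' := fun t => 2 * w t * (a t * w t + q t)) (e := fun t => q t ^ 2 / c) hc
      (by simpa using (hq.pow 2).div_const c) ?_ ?_ (Eventually.of_forall fun t => sq_nonneg _)
    · filter_upwards [hw] with t ht using (ht.pow 2).congr_deriv (by norm_num)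
    · filter_upwards [ha] with t ht
      have hamgm : 2 * w t * q t ≤ c * w t ^ 2 + q t ^ 2 / c := by
        have hsq : 0 ≤ (c * w t - q t) ^ 2 / c := by positivity
        have hexpand : (c * w t - q t) ^ 2 / c = c * w t ^ 2 + q t ^ 2 / c - 2 * w t * q t := by
          field_simp
          ring
        linarith
      nlinarith [sq_nonneg (w t)]
  refine (tendsto_zero_iff_abs_tendsto_zero w).2 ?_
  simpa [Function.comp_def, Real.sqrt_sq_eq_abs] using hsq.sqrt

theorem HasDerivAt.inv_sub_inv_of_logistic_sub {x : ℝ → ℝ} {r k g t : ℝ} (hk : k ≠ 0)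
    (hx : x t ≠ 0) (h : HasDerivAt x (r * x t * (1 - x t / k) - g * x t) t) :
    HasDerivAt (fun s => (x s)⁻¹ - k⁻¹) ((g - r) * ((x t)⁻¹ - k⁻¹) + g / k) t := by
  refine ((h.inv hx).sub_const k⁻¹).congr_deriv ?_
  field_simp
  ring

theorem tendsto_of_hasDerivAt_logistic_sub {x g : ℝ → ℝ} {r k : ℝ} (hr : 0 < r) (hk : k ≠ 0)
    (hg : Tendsto g atTop (𝓝 0)) (hx : ∀ᶠ t in atTop, x t ≠ 0)
    (hderiv : ∀ᶠ t in atTop, HasDerivAt x (r * x t * (1 - x t / k) - g t * x t) t) :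
    Tendsto x atTop (𝓝 k) := by
  have hw : Tendsto (fun t => (x t)⁻¹ - k⁻¹) atTop (𝓝 0) := by
    refine tendsto_zero_of_hasDerivAt_eq_mul_add (a := fun t => g t - r) (q := fun t => g t / k)
      (half_pos hr) ?_ (by simpa using hg.div_const k) ?_
    · filter_upwards [hg.eventually (eventually_le_nhds (half_pos hr))] with t ht
      linarith
    · filter_upwards [hx, hderiv] with t hxt hdt using hdt.inv_sub_inv_of_logistic_sub hk hxt
  have hinv : Tendsto (fun t => (x t)⁻¹) atTop (𝓝 k⁻¹) := by
    simpa using hw.add_const k⁻¹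
  simpa using hinv.inv₀ (inv_ne_zero hk)

theorem crop_tendsto_carrying_capacity_general (r k α φ : ℝ)
    (hr : 0 < r) (hk : 0 < k)
    (y z : ℝ → ℝ)
    (hy0 : Tendsto y atTop (nhds 0)) (hz0 : Tendsto z atTop (nhds 0))
    (x : ℝ → ℝ)
    (hpos : ∀ t ≥ (0:ℝ), 0 < x t)
    (hderiv : ∀ t > (0:ℝ), HasDerivAt x
      (r * x t * (1 - x t / k) - α * x t * y t - φ * α * x t * z t) t) :
    Tendsto x atTop (nhds k) := by
  have hg : Tendsto (fun t => α * y t + φ * α * z t) atTop (𝓝 0) := by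
    simpa using (hy0.const_mul α).add (hz0.const_mul (φ * α))
  refine tendsto_of_hasDerivAt_logistic_sub hr hk.ne' hg ?_ ?_
  · filter_upwards [eventually_ge_atTop 0] with t ht using (hpos t ht).ne'
  · filter_upwards [eventually_gt_atTop 0] with t ht
    exact (hderiv t ht).congr_deriv (by ring)

/-- Final step in the proof of global stability of the pest-free solution:
once the pest populations `y` and `z` tend to zero, the crop biomass `x`,
obeying `x' = r·x·(1 − x/k) − α·x·y − φ·α·x·z`, converges to the carrying
capacity `k`. -/
theorem crop_tendsto_carrying_capacity (r k α φ x₀ : ℝ)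
    (hr : 0 < r) (hk : 0 < k) (hα : 0 < α) (hφ : 0 < φ) (hx₀ : 0 < x₀)
    (y z : ℝ → ℝ)
    (hycont : ContinuousOn y (Set.Ici 0)) (hzcont : ContinuousOn z (Set.Ici 0))
    (hynonneg : ∀ t ≥ (0:ℝ), 0 ≤ y t) (hznonneg : ∀ t ≥ (0:ℝ), 0 ≤ z t)
    (hy0 : Tendsto y atTop (nhds 0)) (hz0 : Tendsto z atTop (nhds 0))
    (x : ℝ → ℝ)
    (hpos : ∀ t ≥ (0:ℝ), 0 < x t)
    (hcont : ContinuousOn x (Set.Ici 0))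
    (hx0 : x 0 = x₀)
    (hderiv : ∀ t > (0:ℝ), HasDerivAt x
      (r * x t * (1 - x t / k) - α * x t * y t - φ * α * x t * z t) t) :
    Tendsto x atTop (nhds k) :=
  crop_tendsto_carrying_capacity_general r k α φ hr hk y z hy0 hz0 x hpos hderiv
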